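/- For the potential U above, for ε_{2n+2} < |x| ≤ ε_{2n} we have U(x) = Σ_{k=1}^{n}(2^{-2k} + 2^{-(2k+1)}) = (1/2) − 2^{-(2n+1)}, hence U(0) − U(x) = 2^{-(2n+1)}. -/

import Mathlib

noncomputable def seussU (ε : ℝ) (x : ℝ) : ℝ :=
  (∑' n : ℕ, (((2 : ℝ) ^ (2 * (n + 1)))⁻¹ + ((2 : ℝ) ^ (2 * (n + 1) + 1))⁻¹) *
      Set.indicator (Set.Icc (-(ε ^ 3 ^ (2 * (n + 1)))) (ε ^ 3 ^ (2 * (n + 1)))) 1 x) +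
  (∑' n : ℕ, (((2 : ℝ) ^ (2 * (n + 1) + 1))⁻¹ + ((2 : ℝ) ^ (2 * (n + 1) + 2))⁻¹) *
      Set.indicator (Set.Icc (-(ε ^ 3 ^ (2 * (n + 1) + 1))) (ε ^ 3 ^ (2 * (n + 1) + 1))) 1
        (Real.pi + x)) +
  (1 / 4) * Set.indicator (Set.Icc (-(ε ^ 3 ^ 1)) (ε ^ 3 ^ 1)) 1 (Real.pi + x)

lemma seuss_sum_formula (n : ℕ) :
    ∑ k ∈ Finset.range n, (((2:ℝ)^(2*(k+1)))⁻¹ + ((2:ℝ)^(2*(k+1)+1))⁻¹)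
      = 1/2 - ((2:ℝ)^(2*n+1))⁻¹ := by
  induction n with
  | zero => norm_num
  | succ m ih =>
    rw [Finset.sum_range_succ, ih]
    have h : ((2:ℝ)^m) ≠ 0 := by positivity
    field_simp
    ring

lemma seuss_term_eq (m : ℕ) :
    ((2:ℝ)^(2*(m+1)))⁻¹ + ((2:ℝ)^(2*(m+1)+1))⁻¹ = (3/8) * (1/4:ℝ)^m := by
  have h : ((2:ℝ)^m) ≠ 0 := by positivity
  have h4 : (4:ℝ)^m = 2^(2*m) := by rw [pow_mul]; norm_num
  rw [div_pow, one_pow, h4]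
  field_simp
  ring

theorem stmt_15 (ε : ℝ) (hε0 : 0 < ε) (hε1 : ε < 1 / 4) (n : ℕ) (hn : 1 ≤ n) (x : ℝ)
    (hx1 : ε ^ 3 ^ (2 * n + 2) < |x|) (hx2 : |x| ≤ ε ^ 3 ^ (2 * n))
    (hx3 : ε ^ 3 ^ 1 < |Real.pi + x|) :
    seussU ε x = ∑ k ∈ Finset.range n, (((2 : ℝ) ^ (2 * (k + 1)))⁻¹ + ((2 : ℝ) ^ (2 * (k + 1) + 1))⁻¹) ∧
    seussU ε x = 1 / 2 - ((2 : ℝ) ^ (2 * n + 1))⁻¹ ∧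
    seussU ε 0 - seussU ε x = ((2 : ℝ) ^ (2 * n + 1))⁻¹ := by
  have hεle1 : ε ≤ 1 := by linarith
  -- second-sum indicators vanish at π + x
  have hpix : ∀ m : ℕ, 1 ≤ m → Real.pi + x ∉ Set.Icc (-(ε ^ 3 ^ m)) (ε ^ 3 ^ m) := by
    intro m hm hmem
    have h1 : ε ^ 3 ^ m ≤ ε ^ 3 ^ 1 :=
      pow_le_pow_of_le_one hε0.le hεle1 (Nat.pow_le_pow_right (by norm_num) hm)
    have h2 : |Real.pi + x| ≤ ε ^ 3 ^ m := abs_le.mpr ⟨by linarith [hmem.1], hmem.2⟩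
    linarith
  -- main formula for the first tsum at x
  have hUx : seussU ε x
      = ∑ k ∈ Finset.range n, (((2:ℝ)^(2*(k+1)))⁻¹ + ((2:ℝ)^(2*(k+1)+1))⁻¹) := by
    unfold seussU
    have hsum2 : (∑' m : ℕ, (((2 : ℝ) ^ (2 * (m + 1) + 1))⁻¹ + ((2 : ℝ) ^ (2 * (m + 1) + 2))⁻¹) *
        Set.indicator (Set.Icc (-(ε ^ 3 ^ (2 * (m + 1) + 1))) (ε ^ 3 ^ (2 * (m + 1) + 1))) 1
          (Real.pi + x)) = 0 := by
      have h0 : ∀ m : ℕ, (((2 : ℝ) ^ (2 * (m + 1) + 1))⁻¹ + ((2 : ℝ) ^ (2 * (m + 1) + 2))⁻¹) *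
          Set.indicator (Set.Icc (-(ε ^ 3 ^ (2 * (m + 1) + 1))) (ε ^ 3 ^ (2 * (m + 1) + 1))) 1
            (Real.pi + x) = 0 := fun m => by
        rw [Set.indicator_of_notMem (hpix _ (by omega)), mul_zero]
      simp only [h0, tsum_zero]
    have hind3 : Set.indicator (Set.Icc (-(ε ^ 3 ^ 1)) (ε ^ 3 ^ 1)) (1 : ℝ → ℝ) (Real.pi + x) = 0 :=
      Set.indicator_of_notMem (hpix 1 le_rfl) _
    rw [hsum2, hind3, mul_zero, add_zero, add_zero]
    rw [tsum_eq_sum (s := Finset.range n) ?_]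
    · apply Finset.sum_congr rfl
      intro k hk
      have hkn : k + 1 ≤ n := Finset.mem_range.mp hk
      have h1 : ε ^ 3 ^ (2 * n) ≤ ε ^ 3 ^ (2 * (k + 1)) :=
        pow_le_pow_of_le_one hε0.le hεle1 (Nat.pow_le_pow_right (by norm_num) (by omega))
      have h2 : |x| ≤ ε ^ 3 ^ (2 * (k + 1)) := le_trans hx2 h1
      have hmem : x ∈ Set.Icc (-(ε ^ 3 ^ (2 * (k + 1)))) (ε ^ 3 ^ (2 * (k + 1))) := by
        rcases abs_le.mp h2 with ⟨ha, hb⟩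
        exact ⟨ha, hb⟩
      rw [Set.indicator_of_mem hmem, Pi.one_apply, mul_one]
    · intro m hm
      have hmn : n ≤ m := by by_contra h; exact hm (Finset.mem_range.mpr (by omega))
      have h1 : ε ^ 3 ^ (2 * (m + 1)) ≤ ε ^ 3 ^ (2 * n + 2) :=
        pow_le_pow_of_le_one hε0.le hεle1 (Nat.pow_le_pow_right (by norm_num) (by omega))
      have hnot : x ∉ Set.Icc (-(ε ^ 3 ^ (2 * (m + 1)))) (ε ^ 3 ^ (2 * (m + 1))) := by
        intro hmem
        have : |x| ≤ ε ^ 3 ^ (2 * (m + 1)) := abs_le.mpr ⟨by linarith [hmem.1], hmem.2⟩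
        linarith
      rw [Set.indicator_of_notMem hnot, mul_zero]
  -- value at 0
  have hpi0 : ∀ m : ℕ, 1 ≤ m → Real.pi + 0 ∉ Set.Icc (-(ε ^ 3 ^ m)) (ε ^ 3 ^ m) := by
    intro m hm hmem
    have h1 : ε ^ 3 ^ m ≤ 1 := pow_le_one₀ hε0.le hεle1
    have := hmem.2
    have hπ := Real.pi_gt_three
    linarith
  have hU0 : seussU ε 0 = 1 / 2 := by
    unfold seussU
    have hsum2 : (∑' m : ℕ, (((2 : ℝ) ^ (2 * (m + 1) + 1))⁻¹ + ((2 : ℝ) ^ (2 * (m + 1) + 2))⁻¹) *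
        Set.indicator (Set.Icc (-(ε ^ 3 ^ (2 * (m + 1) + 1))) (ε ^ 3 ^ (2 * (m + 1) + 1))) 1
          (Real.pi + 0)) = 0 := by
      have h0 : ∀ m : ℕ, (((2 : ℝ) ^ (2 * (m + 1) + 1))⁻¹ + ((2 : ℝ) ^ (2 * (m + 1) + 2))⁻¹) *
          Set.indicator (Set.Icc (-(ε ^ 3 ^ (2 * (m + 1) + 1))) (ε ^ 3 ^ (2 * (m + 1) + 1))) 1
            (Real.pi + 0) = 0 := fun m => by
        rw [Set.indicator_of_notMem (hpi0 _ (by omega)), mul_zero]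
      simp only [h0, tsum_zero]
    have hind3 : Set.indicator (Set.Icc (-(ε ^ 3 ^ 1)) (ε ^ 3 ^ 1)) (1 : ℝ → ℝ) (Real.pi + 0) = 0 :=
      Set.indicator_of_notMem (hpi0 1 le_rfl) _
    rw [hsum2, hind3, mul_zero, add_zero, add_zero]
    have h0mem : ∀ m : ℕ, (0:ℝ) ∈ Set.Icc (-(ε ^ 3 ^ (2 * (m + 1)))) (ε ^ 3 ^ (2 * (m + 1))) := by
      intro m
      constructor <;> [linarith [pow_pos hε0 (3 ^ (2 * (m + 1)))]; positivity]
    have : (∑' m : ℕ, (((2 : ℝ) ^ (2 * (m + 1)))⁻¹ + ((2 : ℝ) ^ (2 * (m + 1) + 1))⁻¹) *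
        Set.indicator (Set.Icc (-(ε ^ 3 ^ (2 * (m + 1)))) (ε ^ 3 ^ (2 * (m + 1)))) 1 0)
        = ∑' m : ℕ, (3/8) * (1/4:ℝ)^m := by
      apply tsum_congr
      intro m
      rw [Set.indicator_of_mem (h0mem m), Pi.one_apply, mul_one, seuss_term_eq]
    rw [this, tsum_mul_left, tsum_geometric_of_lt_one (by norm_num) (by norm_num)]
    norm_num
  refine ⟨hUx, ?_, ?_⟩
  · rw [hUx, seuss_sum_formula]
  · rw [hUx, seuss_sum_formula, hU0]
    ring
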